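/- arXiv:0706.2648 — 5 statements merged into one kernel-verified Lean document; each statement's English description precedes it below -/
import Mathlib

section
/- Let C be a category, I a nonempty totally ordered set, and F an I-filtration of an object X of C. If F is left locally constant (resp. right locally constant) then F is left continuous (resp. right continuous). Conversely, if F is of finite length and left continuous (resp. right continuous), then F is left locally constant (resp. right locally constant). -/
open CategoryTheory CategoryTheory.Limits

universe v u

/-- The index category `I* = I ∪ {−∞}`, in which `Hom(i,j)` is a singleton iff
`i ≥ j`: we realize it as the order dual of `WithBot I`, viewed as a preorder
category.  The element `−∞` is `⊥ : WithBot I`. -/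
abbrev IStar (I : Type*) [LinearOrder I] : Type _ := (WithBot I)ᵒᵈ

/-- An `I`-filtration of an object `X` of `C`: a functor `F : I* ⥤ C` with
`F(−∞) = X` sending every morphism of `I*` to a monomorphism. -/
structure CatFiltration (I : Type*) [LinearOrder I]
    (C : Type u) [Category.{v} C] (X : C) where
  func : IStar I ⥤ C
  bot_eq : func.obj (OrderDual.toDual (⊥ : WithBot I)) = X
  mono_map : ∀ {a b : IStar I} (f : a ⟶ b), Mono (func.map f)

/-- `I` is left dense at `i` if `I_{<i}` is nonempty and `i` is its least upper
bound. -/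
def LeftDenseAt (I : Type*) [LinearOrder I] (i : I) : Prop :=
  (Set.Iio i).Nonempty ∧ IsLUB (Set.Iio i) i

/-- `I` is right dense at `i` if `I_{>i}` is nonempty and `i` is its greatest lower
bound. -/
def RightDenseAt (I : Type*) [LinearOrder I] (i : I) : Prop :=
  (Set.Ioi i).Nonempty ∧ IsGLB (Set.Ioi i) i

namespace CatFiltration

variable {I : Type*} [LinearOrder I] {C : Type u} [Category.{v} C] {X : C}

/-- The object `F(i)`, for `i ∈ I`. -/
def obj (F : CatFiltration I C X) (i : I) : C :=
  F.func.obj (OrderDual.toDual (i : WithBot I))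

/-- The structural monomorphism `F(u_{ij}) : F(i) ⟶ F(j)`, for `j ≤ i` in `I`. -/
def map (F : CatFiltration I C X) {i j : I} (h : j ≤ i) : F.obj i ⟶ F.obj j :=
  F.func.map (homOfLE (OrderDual.toDual_le_toDual.mpr (WithBot.coe_le_coe.mpr h)))

/-- `F` is left locally constant at `i` if `I` is not left dense at `i` or there is
`j < i` with `F(u_{ij})` an isomorphism. -/
def LeftLocallyConstantAt (F : CatFiltration I C X) (i : I) : Prop :=
  ¬ LeftDenseAt I i ∨ ∃ (j : I) (h : j < i), IsIso (F.map h.le)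

/-- `F` is right locally constant at `i` if `I` is not right dense at `i` or there
is `j > i` with `F(u_{ji})` an isomorphism. -/
def RightLocallyConstantAt (F : CatFiltration I C X) (i : I) : Prop :=
  ¬ RightDenseAt I i ∨ ∃ (j : I) (h : i < j), IsIso (F.map h.le)

/-- `I₀` is a jumping set of `F`: for all `i > j` in `I` with `[j,i] ∩ I₀ = ∅`, the
morphism `F(u_{ij})` is an isomorphism.  `F` is of finite length if it admits a
(finite) jumping set. -/
def IsJumpingSet (F : CatFiltration I C X) (I₀ : Finset I) : Prop :=
  ∀ ⦃i j : I⦄ (h : j < i), (∀ k ∈ I₀, ¬ (j ≤ k ∧ k ≤ i)) → IsIso (F.map h.le)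

/-- `F` is of finite length if it admits a finite jumping set. -/
def FiniteLength (F : CatFiltration I C X) : Prop :=
  ∃ I₀ : Finset I, F.IsJumpingSet I₀

end CatFiltration

namespace CatFiltration

variable {I : Type*} [LinearOrder I] {C : Type u} [Category.{v} C] {X : C}

/-- The restriction of `F` to the full subcategory `I_{<i}` of `I*`. -/
def ltDiagram (F : CatFiltration I C X) (i : I) : (↥(Set.Iio i))ᵒᵈ ⥤ C :=
  (Monotone.functor
      (f := fun j : (↥(Set.Iio i))ᵒᵈ =>
        (OrderDual.toDual (((OrderDual.ofDual j : ↥(Set.Iio i)) : I) : WithBot I) :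
          IStar I))
      (by
        intro a b hab
        exact OrderDual.toDual_le_toDual.mpr
          (WithBot.coe_le_coe.mpr (Subtype.coe_le_coe.mpr (OrderDual.ofDual_le_ofDual.mpr hab)))))
    ⋙ F.func

/-- The cone over `F|_{I_{<i}}` with apex `F(i)`, whose legs are the structural
morphisms `F(u_{ij}) : F(i) ⟶ F(j)` for `j < i`. -/
def ltCone (F : CatFiltration I C X) (i : I) : Cone (F.ltDiagram i) where
  pt := F.obj i
  π :=
    { app := fun j => F.map (OrderDual.ofDual j).2.le
      naturality := by
        intro a b f
        show 𝟙 _ ≫ F.func.map _ = F.func.map _ ≫ F.func.map _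
        rw [Category.id_comp]
        refine Eq.trans ?_ (F.func.map_comp _ _)
        exact congrArg F.func.map (Subsingleton.elim _ _) }

/-- The restriction of `F` to the full subcategory `I_{>i}` of `I*`. -/
def gtDiagram (F : CatFiltration I C X) (i : I) : (↥(Set.Ioi i))ᵒᵈ ⥤ C :=
  (Monotone.functor
      (f := fun j : (↥(Set.Ioi i))ᵒᵈ =>
        (OrderDual.toDual (((OrderDual.ofDual j : ↥(Set.Ioi i)) : I) : WithBot I) :
          IStar I))
      (by
        intro a b hab
        exact OrderDual.toDual_le_toDual.mpr
          (WithBot.coe_le_coe.mpr (Subtype.coe_le_coe.mpr (OrderDual.ofDual_le_ofDual.mpr hab)))))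
    ⋙ F.func

/-- The cocone under `F|_{I_{>i}}` with apex `F(i)`, whose legs are the structural
morphisms `F(u_{ji}) : F(j) ⟶ F(i)` for `j > i`. -/
def gtCocone (F : CatFiltration I C X) (i : I) : Cocone (F.gtDiagram i) where
  pt := F.obj i
  ι :=
    { app := fun j => F.map (OrderDual.ofDual j).2.le
      naturality := by
        intro a b f
        show F.func.map _ ≫ F.func.map _ = F.func.map _ ≫ 𝟙 _
        rw [Category.comp_id]
        refine Eq.trans (F.func.map_comp _ _).symm ?_
        exact congrArg F.func.map (Subsingleton.elim _ _) }

/-- `F` is left continuous at `i` if `I` is not left dense at `i`, or the limit of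
`F|_{I_{<i}}` exists and the canonical morphism `F(i) → lim F|_{I_{<i}}` is an
isomorphism; equivalently, the canonical cone with apex `F(i)` is a limit cone. -/
def LeftContinuousAt (F : CatFiltration I C X) (i : I) : Prop :=
  ¬ LeftDenseAt I i ∨ Nonempty (IsLimit (F.ltCone i))

/-- `F` is right continuous at `i` if `I` is not right dense at `i`, or the colimit
of `F|_{I_{>i}}` exists and the canonical morphism `colim F|_{I_{>i}} → F(i)` is an
isomorphism; equivalently, the canonical cocone with apex `F(i)` is a colimit
cocone. -/
def RightContinuousAt (F : CatFiltration I C X) (i : I) : Prop :=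
  ¬ RightDenseAt I i ∨ Nonempty (IsColimit (F.gtCocone i))

end CatFiltration

/-!
If a diagram `D` indexed by a linear order is constant (all transition maps isomorphisms) below
some `j₀`, then `D.obj j₀` is its limit, so a cone over `D` is a limit exactly when its leg at `j₀`
is an isomorphism; dually for colimits. At a dense point `i` of a filtration, left local constancy
provides `l < i` with `F(i) → F(l)` an isomorphism, and since the structural maps are monomorphisms
all of `F|_{[l, i]}` is then constant. Conversely, a finite jumping set misses some interval
`[l, i)`, so `F` is constant there, and continuity at `i` makes `F(i) → F(l)` an isomorphism.
-/

namespace CategoryTheory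

lemma isIso_of_isIso_comp_of_mono {C : Type u} [Category.{v} C] {X Y Z : C} (f : X ⟶ Y)
    (g : Y ⟶ Z) [Mono g] [IsIso (f ≫ g)] : IsIso g :=
  have : IsSplitEpi g := ⟨⟨inv (f ≫ g) ≫ f, by simp⟩⟩
  isIso_of_mono_of_isSplitEpi g

namespace Limits

variable {J : Type*} [LinearOrder J] {C : Type u} [Category.{v} C] {D : J ⥤ C}

section Cone

variable {j₀ : J} (hD : ∀ k (g : k ⟶ j₀), IsIso (D.map g))
include hD

noncomputable def legOfIsIsoMapTo (k : J) : D.obj j₀ ⟶ D.obj k :=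
  have := hD _ (min_le_right k j₀).hom
  inv (D.map (min_le_right k j₀).hom) ≫ D.map (min_le_left k j₀).hom

lemma map_comp_legOfIsIsoMapTo {n k : J} (g : n ⟶ j₀) (g' : n ⟶ k) :
    D.map g ≫ legOfIsIsoMapTo hD k = D.map g' := by
  have := hD _ (min_le_right k j₀).hom
  have hn : n ⟶ min k j₀ := (le_min (leOfHom g') (leOfHom g)).hom
  rw [legOfIsIsoMapTo, Subsingleton.elim g (hn ≫ (min_le_right k j₀).hom), D.map_comp_assoc,
    IsIso.hom_inv_id_assoc, ← D.map_comp]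
  congr 1

lemma legOfIsIsoMapTo_self : legOfIsIsoMapTo hD j₀ = 𝟙 _ := by
  simpa using map_comp_legOfIsIsoMapTo hD (𝟙 j₀) (𝟙 j₀)

@[simps]
noncomputable def coneOfIsIsoMapTo : Cone D where
  pt := D.obj j₀
  π :=
    { app := legOfIsIsoMapTo hD
      naturality := fun a b f => by
        let g := (min_le_right a j₀).hom
        have := hD _ g
        dsimp only [Functor.const_obj_obj, Functor.const_obj_map]
        rw [Category.id_comp, ← cancel_epi (D.map g),
          ← Category.assoc, map_comp_legOfIsIsoMapTo hD g (min_le_left a j₀).hom, ← D.map_comp,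
          map_comp_legOfIsIsoMapTo] }

lemma Cone.π_app_eq_π_app_comp_legOfIsIsoMapTo (s : Cone D) (k : J) :
    s.π.app k = s.π.app j₀ ≫ legOfIsIsoMapTo hD k := by
  rw [← s.w (min_le_right k j₀).hom, Category.assoc,
    map_comp_legOfIsIsoMapTo hD _ (min_le_left k j₀).hom, s.w]

noncomputable def isLimitConeOfIsIsoMapTo : IsLimit (coneOfIsIsoMapTo hD) where
  lift s := s.π.app j₀
  fac s k := (Cone.π_app_eq_π_app_comp_legOfIsIsoMapTo hD s k).symm
  uniq s m hm := by
    rw [← hm j₀, coneOfIsIsoMapTo_π_app, legOfIsIsoMapTo_self]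
    exact (Category.comp_id m).symm

lemma nonempty_isLimit_iff_isIso_π_app (c : Cone D) : Nonempty (IsLimit c) ↔ IsIso (c.π.app j₀) :=
  (isLimitConeOfIsIsoMapTo hD).nonempty_isLimit_iff_isIso_lift

end Cone

section Cocone

variable {j₀ : J} (hD : ∀ k (g : j₀ ⟶ k), IsIso (D.map g))
include hD

noncomputable def legOfIsIsoMapFrom (k : J) : D.obj k ⟶ D.obj j₀ :=
  have := hD _ (le_max_right k j₀).hom
  D.map (le_max_left k j₀).hom ≫ inv (D.map (le_max_right k j₀).hom)

lemma legOfIsIsoMapFrom_comp_map {n k : J} (g : j₀ ⟶ n) (g' : k ⟶ n) :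
    legOfIsIsoMapFrom hD k ≫ D.map g = D.map g' := by
  have := hD _ (le_max_right k j₀).hom
  have hn : max k j₀ ⟶ n := (max_le (leOfHom g') (leOfHom g)).hom
  rw [legOfIsIsoMapFrom, Subsingleton.elim g ((le_max_right k j₀).hom ≫ hn), D.map_comp,
    Category.assoc, IsIso.inv_hom_id_assoc, ← D.map_comp]
  congr 1

lemma legOfIsIsoMapFrom_self : legOfIsIsoMapFrom hD j₀ = 𝟙 _ := by
  simpa using legOfIsIsoMapFrom_comp_map hD (𝟙 j₀) (𝟙 j₀)

@[simps]
noncomputable def coconeOfIsIsoMapFrom : Cocone D where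
  pt := D.obj j₀
  ι :=
    { app := legOfIsIsoMapFrom hD
      naturality := fun a b f => by
        let g := (le_max_right b j₀).hom
        have := hD _ g
        dsimp only [Functor.const_obj_obj, Functor.const_obj_map]
        rw [Category.comp_id, ← cancel_mono (D.map g), Category.assoc,
          legOfIsIsoMapFrom_comp_map hD g (le_max_left b j₀).hom, ← D.map_comp,
          legOfIsIsoMapFrom_comp_map] }

lemma Cocone.ι_app_eq_legOfIsIsoMapFrom_comp_ι_app (s : Cocone D) (k : J) :
    s.ι.app k = legOfIsIsoMapFrom hD k ≫ s.ι.app j₀ := by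
  rw [← s.w (le_max_right k j₀).hom, ← Category.assoc,
    legOfIsIsoMapFrom_comp_map hD _ (le_max_left k j₀).hom, s.w]

noncomputable def isColimitCoconeOfIsIsoMapFrom : IsColimit (coconeOfIsIsoMapFrom hD) where
  desc s := s.ι.app j₀
  fac s k := (Cocone.ι_app_eq_legOfIsIsoMapFrom_comp_ι_app hD s k).symm
  uniq s m hm := by
    rw [← hm j₀, coconeOfIsIsoMapFrom_ι_app, legOfIsIsoMapFrom_self]
    exact (Category.id_comp m).symm

lemma nonempty_isColimit_iff_isIso_ι_app (c : Cocone D) :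
    Nonempty (IsColimit c) ↔ IsIso (c.ι.app j₀) :=
  (isColimitCoconeOfIsIsoMapFrom hD).nonempty_isColimit_iff_isIso_desc

end Cocone

end Limits
end CategoryTheory

namespace LeftDenseAt

variable {I : Type*} [LinearOrder I] {i : I}

lemma exists_forall_notMem_Ico (hd : LeftDenseAt I i) (s : Finset I) :
    ∃ l < i, ∀ m ∈ s, m ∉ Set.Ico l i := by
  induction s using Finset.induction_on with
  | empty =>
    obtain ⟨l, hl⟩ := hd.1
    exact ⟨l, hl, by simp⟩
  | insert a s _ ih =>
    obtain ⟨l, hli, hl⟩ := ih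
    rcases lt_or_ge a i with hai | hia
    · obtain ⟨l', hl'i, hal', -⟩ := hd.2.exists_between hai
      refine ⟨max l l', max_lt hli hl'i,
        (Finset.forall_mem_insert _ _ _).2 ⟨?_, fun m hm hm' => ?_⟩⟩
      · exact fun h => (lt_of_lt_of_le hal' (le_max_right l l')).not_ge h.1
      · exact hl m hm ⟨(le_max_left l l').trans hm'.1, hm'.2⟩
    · exact ⟨l, hli, (Finset.forall_mem_insert _ _ _).2 ⟨fun h => h.2.not_ge hia, hl⟩⟩

end LeftDenseAt

lemma RightDenseAt.exists_forall_notMem_Ioc {I : Type*} [LinearOrder I] {i : I}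
    (hd : RightDenseAt I i) (s : Finset I) : ∃ l > i, ∀ m ∈ s, m ∉ Set.Ioc i l := by
  obtain ⟨l, hl, hs⟩ :=
    LeftDenseAt.exists_forall_notMem_Ico (I := Iᵒᵈ) hd (s.map OrderDual.toDual.toEmbedding)
  exact ⟨OrderDual.ofDual l, hl, fun m hm hm' =>
    hs (OrderDual.toDual m) (Finset.mem_map_equiv.2 hm) ⟨hm'.2, hm'.1⟩⟩

namespace CatFiltration

variable {I : Type*} [LinearOrder I] {C : Type u} [Category.{v} C] {X : C}
  (F : CatFiltration I C X)

instance map_mono {i j : I} (h : j ≤ i) : Mono (F.map h) :=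
  F.mono_map _

lemma map_refl {i : I} (h : i ≤ i) : F.map h = 𝟙 (F.obj i) :=
  F.func.map_id _

lemma map_comp_map {i j k : I} (hjk : k ≤ j) (hij : j ≤ i) :
    F.map hij ≫ F.map hjk = F.map (hjk.trans hij) :=
  (F.func.map_comp _ _).symm

lemma isIso_map_of_isIso_map_of_le {i j k : I} (hjk : j ≤ k) (hki : k ≤ i)
    [IsIso (F.map (hjk.trans hki))] : IsIso (F.map hki) ∧ IsIso (F.map hjk) := by
  have : IsIso (F.map hki ≫ F.map hjk) := by rwa [F.map_comp_map]
  have := isIso_of_isIso_comp_of_mono (F.map hki) (F.map hjk)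
  exact ⟨IsIso.of_isIso_comp_right (F.map hki) (F.map hjk), this⟩

lemma nonempty_isLimit_ltCone_iff {i l : I} (hl : l < i)
    (hconst : ∀ k (hlk : l ≤ k), k < i → IsIso (F.map hlk)) :
    Nonempty (IsLimit (F.ltCone i)) ↔ IsIso (F.map hl.le) :=
  nonempty_isLimit_iff_isIso_π_app (D := F.ltDiagram i) (j₀ := OrderDual.toDual ⟨l, hl⟩)
    (fun k g => hconst _ (leOfHom g) (OrderDual.ofDual k).2) _

lemma nonempty_isColimit_gtCocone_iff {i l : I} (hl : i < l)
    (hconst : ∀ k (hkl : k ≤ l), i < k → IsIso (F.map hkl)) :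
    Nonempty (IsColimit (F.gtCocone i)) ↔ IsIso (F.map hl.le) :=
  nonempty_isColimit_iff_isIso_ι_app (D := F.gtDiagram i) (j₀ := OrderDual.toDual ⟨l, hl⟩)
    (fun k g => hconst _ (leOfHom g) (OrderDual.ofDual k).2) _

variable {F}

lemma LeftLocallyConstantAt.leftContinuousAt {i : I} (h : F.LeftLocallyConstantAt i) :
    F.LeftContinuousAt i := by
  obtain hd | ⟨j, hj, hiso⟩ := h
  · exact Or.inl hd
  · refine Or.inr ((F.nonempty_isLimit_ltCone_iff hj fun k hjk hki => ?_).2 hiso)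
    exact (F.isIso_map_of_isIso_map_of_le hjk hki.le).2

lemma RightLocallyConstantAt.rightContinuousAt {i : I} (h : F.RightLocallyConstantAt i) :
    F.RightContinuousAt i := by
  obtain hd | ⟨j, hj, hiso⟩ := h
  · exact Or.inl hd
  · refine Or.inr ((F.nonempty_isColimit_gtCocone_iff hj fun k hkj hik => ?_).2 hiso)
    exact (F.isIso_map_of_isIso_map_of_le hik.le hkj).1

namespace IsJumpingSet

variable {I₀ : Finset I} (hI₀ : F.IsJumpingSet I₀)
include hI₀

lemma isIso_map {i j : I} (h : j ≤ i) (hfree : ∀ k ∈ I₀, k ∉ Set.Icc j i) : IsIso (F.map h) := by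
  obtain rfl | hlt := h.eq_or_lt
  · rw [F.map_refl]
    infer_instance
  · exact hI₀ hlt hfree

lemma leftLocallyConstantAt {i : I} (hc : F.LeftContinuousAt i) : F.LeftLocallyConstantAt i := by
  by_cases hd : LeftDenseAt I i
  · obtain ⟨l, hl, hfree⟩ := hd.exists_forall_notMem_Ico I₀
    have hconst : ∀ k (hlk : l ≤ k), k < i → IsIso (F.map hlk) := fun k hlk hki =>
      hI₀.isIso_map hlk fun m hm hm' => hfree m hm ⟨hm'.1, hm'.2.trans_lt hki⟩
    exact Or.inr
      ⟨l, hl, (F.nonempty_isLimit_ltCone_iff hl hconst).1 (hc.resolve_left (not_not.2 hd))⟩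
  · exact Or.inl hd

lemma rightLocallyConstantAt {i : I} (hc : F.RightContinuousAt i) :
    F.RightLocallyConstantAt i := by
  by_cases hd : RightDenseAt I i
  · obtain ⟨l, hl, hfree⟩ := hd.exists_forall_notMem_Ioc I₀
    have hconst : ∀ k (hkl : k ≤ l), i < k → IsIso (F.map hkl) := fun k hkl hik =>
      hI₀.isIso_map hkl fun m hm hm' => hfree m hm ⟨hik.trans_le hm'.1, hm'.2⟩
    exact Or.inr
      ⟨l, hl, (F.nonempty_isColimit_gtCocone_iff hl hconst).1 (hc.resolve_left (not_not.2 hd))⟩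
  · exact Or.inl hd

end IsJumpingSet

end CatFiltration

open CatFiltration in
theorem stmt5_general {I : Type*} [LinearOrder I]
    {C : Type u} [Category.{v} C] {X : C} (F : CatFiltration I C X) :
    ((∀ i : I, F.LeftLocallyConstantAt i) → ∀ i : I, F.LeftContinuousAt i) ∧
    ((∀ i : I, F.RightLocallyConstantAt i) → ∀ i : I, F.RightContinuousAt i) ∧
    (F.FiniteLength →
      (∀ i : I, F.LeftContinuousAt i) → ∀ i : I, F.LeftLocallyConstantAt i) ∧
    (F.FiniteLength →
      (∀ i : I, F.RightContinuousAt i) → ∀ i : I, F.RightLocallyConstantAt i) :=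
  ⟨fun h i => (h i).leftContinuousAt, fun h i => (h i).rightContinuousAt,
    fun ⟨_, hI₀⟩ h i => hI₀.leftLocallyConstantAt (h i),
    fun ⟨_, hI₀⟩ h i => hI₀.rightLocallyConstantAt (h i)⟩

open CatFiltration in
/-- If an `I`-filtration `F` is left (resp. right) locally
constant then it is left (resp. right) continuous; the converse holds when `F` is
of finite length. -/
theorem stmt5 {I : Type*} [LinearOrder I] [Nonempty I]
    {C : Type u} [Category.{v} C] {X : C} (F : CatFiltration I C X) :
    ((∀ i : I, F.LeftLocallyConstantAt i) → ∀ i : I, F.LeftContinuousAt i) ∧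
    ((∀ i : I, F.RightLocallyConstantAt i) → ∀ i : I, F.RightContinuousAt i) ∧
    (F.FiniteLength →
      (∀ i : I, F.LeftContinuousAt i) → ∀ i : I, F.LeftLocallyConstantAt i) ∧
    (F.FiniteLength →
      (∀ i : I, F.RightContinuousAt i) → ∀ i : I, F.RightLocallyConstantAt i) :=
  stmt5_general F
end

section
/- Let C be a category, I a nonempty totally ordered set, and F an I-filtration of finite length of an object X of C with jumping set I₀. Suppose that F^l is well defined, i.e., for every i ∈ I at which I is left dense the limit lim_{k<i} F(k) exists. Then F^l is of finite length and I₀ is a jumping set of F^l. -/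
open CategoryTheory CategoryTheory.Limits

universe v u

/-- An `I`-filtration of an object `X` of `C`, modelled by its subobjects: an
antitone family `(F(i))_{i ∈ I}` of subobjects of `X` (the value at `−∞` being `X`
itself); the structural morphisms `F(u_{ij}) : F(i) → F(j)` (`j ≤ i`) are the
inclusions of subobjects, and `F(u_{ij})` is an isomorphism exactly when
`F(i) = F(j)` as subobjects. -/
structure SubFiltration (I : Type*) [LinearOrder I]
    {C : Type u} [Category.{v} C] (X : C) where
  obj : I → Subobject X
  antitone : Antitone obj

/-- `I₀` is a jumping set of the family `G` of subobjects of `X`: for all `i > j`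
in `I` with `[j,i] ∩ I₀ = ∅`, the structural morphism `G(i) → G(j)` is an
isomorphism, i.e. `G i = G j` as subobjects. -/
def IsJumpingSetFun {I : Type*} [LinearOrder I] {C : Type u} [Category.{v} C]
    {X : C} (G : I → Subobject X) (I₀ : Finset I) : Prop :=
  ∀ i j : I, j < i → (∀ k ∈ I₀, ¬ (j ≤ k ∧ k ≤ i)) → G i = G j

namespace SubFiltration

variable {I : Type*} [LinearOrder I] {C : Type u} [Category.{v} C] {X : C}

open Classical in
/-- The left continuous filtration `F^l` associated to `F`:
`F^l(i) = lim_{k<i} F(k)` (the greatest lower bound of `(F(k))_{k<i}` among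
subobjects of `X`) if `I` is left dense at `i`, and `F^l(i) = F(i)` otherwise.
It is well defined as soon as these limits exist. -/
noncomputable def lClosure (F : SubFiltration I X)
    (hW : ∀ i : I, LeftDenseAt I i → ∃ m, IsGLB (F.obj '' Set.Iio i) m) :
    I → Subobject X :=
  fun i => if hd : LeftDenseAt I i then (hW i hd).choose else F.obj i

end SubFiltration

/- Away from the jumping set, `F^l` agrees with `F`: at a point `j ∉ I₀` where `I` is left
dense, finiteness of `I₀` leaves some `k < j` with `[k, j] ∩ I₀ = ∅`, so `F` is constant on
`[k, j]` and the limit `lim_{k<j} F(k)` is just `F(j)`. Hence on any interval `[j, i]` missing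
`I₀`, `F^l(i) = F(i) = F(j) = F^l(j)`. -/

theorem LeftDenseAt.exists_lt_forall_notMem_Icc {I : Type*} [LinearOrder I] {j : I}
    (hd : LeftDenseAt I j) {s : Finset I} (hj : j ∉ s) :
    ∃ k < j, ∀ c ∈ s, ¬ (k ≤ c ∧ c ≤ j) := by
  induction s using Finset.induction_on with
  | empty =>
    obtain ⟨k, hk⟩ := hd.1
    exact ⟨k, hk, by simp⟩
  | insert a s _ ih =>
    obtain ⟨k, hkj, hks⟩ := ih fun h => hj (Finset.mem_insert_of_mem h)
    have haj : a ≠ j := fun h => hj (h ▸ Finset.mem_insert_self a s)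
    rcases haj.lt_or_gt with haj | hja
    · obtain ⟨k', hk'j, hak', -⟩ := hd.2.exists_between haj
      refine ⟨max k k', max_lt hkj hk'j, ?_⟩
      simp only [Finset.mem_insert, forall_eq_or_imp, max_le_iff]
      exact ⟨fun h => hak'.not_ge h.1.2, fun c hc h => hks c hc ⟨h.1.1, h.2⟩⟩
    · refine ⟨k, hkj, ?_⟩
      simp only [Finset.mem_insert, forall_eq_or_imp]
      exact ⟨fun h => hja.not_ge h.2, hks⟩

namespace SubFiltration

variable {I : Type*} [LinearOrder I] {C : Type u} [Category.{v} C] {X : C}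

theorem isGLB_image_Iio_of_eq {F : SubFiltration I X} {i k : I} (hki : k < i)
    (hF : F.obj i = F.obj k) : IsGLB (F.obj '' Set.Iio i) (F.obj i) := by
  refine ⟨?_, fun b hb => hF ▸ hb ⟨k, hki, rfl⟩⟩
  rintro _ ⟨l, hli, rfl⟩
  exact F.antitone hli.le

theorem lClosure_eq_obj_of_notMem (F : SubFiltration I X) {I₀ : Finset I}
    (hI₀ : IsJumpingSetFun F.obj I₀)
    (hW : ∀ i : I, LeftDenseAt I i → ∃ m, IsGLB (F.obj '' Set.Iio i) m)
    {j : I} (hj : j ∉ I₀) : F.lClosure hW j = F.obj j := by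
  unfold lClosure
  split_ifs with hd
  · obtain ⟨k, hkj, hk⟩ := hd.exists_lt_forall_notMem_Icc hj
    exact (hW j hd).choose_spec.unique (isGLB_image_Iio_of_eq hkj (hI₀ j k hkj hk))
  · rfl

end SubFiltration

theorem stmt6_general {I : Type*} [LinearOrder I]
    {C : Type u} [Category.{v} C] {X : C}
    (F : SubFiltration I X) (I₀ : Finset I) (hI₀ : IsJumpingSetFun F.obj I₀)
    (hW : ∀ i : I, LeftDenseAt I i → ∃ m, IsGLB (F.obj '' Set.Iio i) m) :
    IsJumpingSetFun (F.lClosure hW) I₀ := by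
  intro i j hji hk
  have hi : i ∉ I₀ := fun h => hk i h ⟨hji.le, le_rfl⟩
  have hj : j ∉ I₀ := fun h => hk j h ⟨le_rfl, hji.le⟩
  rw [F.lClosure_eq_obj_of_notMem hI₀ hW hi, F.lClosure_eq_obj_of_notMem hI₀ hW hj]
  exact hI₀ i j hji hk

/-- **Statement 6.** Let `F` be an `I`-filtration of finite length of `X` with
jumping set `I₀`, and suppose that `F^l` is well defined, i.e. for every `i ∈ I` at
which `I` is left dense the limit `lim_{k<i} F(k)` exists.  Then `F^l` is of finite
length, and `I₀` is a jumping set of `F^l`. -/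
theorem stmt6 {I : Type*} [LinearOrder I] [Nonempty I]
    {C : Type u} [Category.{v} C] {X : C}
    (F : SubFiltration I X) (I₀ : Finset I) (hI₀ : IsJumpingSetFun F.obj I₀)
    (hW : ∀ i : I, LeftDenseAt I i → ∃ m, IsGLB (F.obj '' Set.Iio i) m) :
    IsJumpingSetFun (F.lClosure hW) I₀ :=
  stmt6_general F I₀ hI₀ hW
end

section
/- Let E, F₀, F be finite dimensional complex inner product spaces. Let π: E → F₀ be a surjective ℂ-linear map such that the norm of F₀ is the quotient norm induced by π (for every y ∈ F₀, ‖y‖_{F₀} = inf{‖x‖_E : π x = y}), and let i: F₀ → F be a ℂ-linear isometric embedding. Set φ = i ∘ π and let φ† : F → E be the adjoint of φ. Define on E × F the sesquilinear form ⟨(x,y),(x',y')⟩₀ = ⟨x − φ†y, x' − φ†y'⟩_E + ⟨y,y'⟩_F. Then ⟨·,·⟩₀ is a Hermitian inner product on E × F such that: (a) for all x, x' ∈ E, ⟨(x, φx), (x', φx')⟩₀ = ⟨x, x'⟩_E (so x ↦ (x, φx) is an isometric embedding of E into (E × F, ⟨·,·⟩₀)); and (b) the quotient norm on F induced by the second projection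 pr₂: (E × F, ⟨·,·⟩₀) → F equals the norm ‖·‖_F. -/
open scoped InnerProductSpace

/-!
The form is the pull-back of the `L²` inner product on `E × F` along the invertible shear
`(x, y) ↦ (x - φ† y, y)`, so it is an inner product. On the fibre `pr₂ = y` its square norm is
`‖x - φ† y‖² + ‖y‖²`, minimised at `x = φ† y`; this gives (b). Expanding the form on the graph of
`φ` leaves `⟪x, x'⟫` as soon as `φ φ† φ = φ`, which holds because `i† i = 1` and `π π† = 1`.
The latter says that `π†` is isometric: `π` is a contraction for the quotient norm, hence so is
`π†`, while `‖y‖² = re ⟪x, π† y⟫ ≤ ‖x‖ ‖π† y‖` for every `x` with `π x = y`, and taking the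
infimum over such `x` gives `‖y‖ ≤ ‖π† y‖`.
-/

section

open RCLike

variable {𝕜 : Type*} [RCLike 𝕜]

abbrev InnerProductSpace.Core.comap {M E : Type*} [AddCommGroup M] [Module 𝕜 M]
    [NormedAddCommGroup E] [InnerProductSpace 𝕜 E] (f : M →ₗ[𝕜] E) (hf : Function.Injective f) :
    InnerProductSpace.Core 𝕜 M :=
  { inner p q := ⟪f p, f q⟫_𝕜
    conj_inner_symm p q := _root_.inner_conj_symm (f p) (f q)
    re_inner_nonneg p := _root_.inner_self_nonneg (x := f p)
    add_left p q r := by rw [map_add, _root_.inner_add_left]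
    smul_left p q c := by rw [map_smul, _root_.inner_smul_left]
    definite p hp := hf <| by rw [map_zero]; exact _root_.inner_self_eq_zero.mp hp }

variable {V W : Type*} [NormedAddCommGroup V] [InnerProductSpace 𝕜 V]
  [NormedAddCommGroup W] [InnerProductSpace 𝕜 W]

noncomputable def shearL2 (ψ : W →ₗ[𝕜] V) : V × W →ₗ[𝕜] WithLp 2 (V × W) :=
  (WithLp.linearEquiv 2 𝕜 (V × W)).symm.toLinearMap ∘ₗ
    (LinearMap.fst 𝕜 V W - ψ ∘ₗ LinearMap.snd 𝕜 V W).prod (LinearMap.snd 𝕜 V W)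

theorem shearL2_injective (ψ : W →ₗ[𝕜] V) : Function.Injective (shearL2 ψ) := by
  intro p q h
  have h₂ : p.2 = q.2 := congrArg (fun z ↦ (WithLp.ofLp z).2) h
  have h₁ : p.1 - ψ p.2 = q.1 - ψ q.2 := congrArg (fun z ↦ (WithLp.ofLp z).1) h
  rw [h₂, sub_left_inj] at h₁
  exact Prod.ext h₁ h₂

noncomputable abbrev shearCore (ψ : W →ₗ[𝕜] V) : InnerProductSpace.Core 𝕜 (V × W) :=
  .comap (shearL2 ψ) (shearL2_injective ψ)

theorem shearCore_inner (ψ : W →ₗ[𝕜] V) (p q : V × W) :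
    (shearCore ψ).inner p q = ⟪p.1 - ψ p.2, q.1 - ψ q.2⟫_𝕜 + ⟪p.2, q.2⟫_𝕜 :=
  rfl

theorem re_shearCore_inner_self (ψ : W →ₗ[𝕜] V) (p : V × W) :
    re ((shearCore ψ).inner p p) = ‖p.1 - ψ p.2‖ ^ 2 + ‖p.2‖ ^ 2 := by
  rw [shearCore_inner, map_add, inner_self_eq_norm_sq, inner_self_eq_norm_sq]

theorem sInf_sqrt_re_shearCore_inner_self (ψ : W →ₗ[𝕜] V) (y : W) :
    sInf ((fun p ↦ √(re ((shearCore ψ).inner p p))) '' {p : V × W | p.2 = y}) = ‖y‖ := by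
  refine IsLeast.csInf_eq ⟨⟨(ψ y, y), rfl, ?_⟩, ?_⟩
  · simp [re_shearCore_inner_self]
  · rintro _ ⟨p, rfl, rfl⟩
    dsimp only
    rw [re_shearCore_inner_self]
    exact Real.le_sqrt_of_sq_le (le_add_of_nonneg_left (sq_nonneg _))

def LinearMap.HasQuotientNorm (π : V →ₗ[𝕜] W) : Prop :=
  ∀ y, ‖y‖ = sInf ((fun x : V ↦ ‖x‖) '' (π ⁻¹' {y}))

theorem LinearMap.HasQuotientNorm.norm_apply_le {π : V →ₗ[𝕜] W} (hπ : π.HasQuotientNorm)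
    (x : V) : ‖π x‖ ≤ ‖x‖ :=
  (hπ (π x)).trans_le <| csInf_le ⟨0, by rintro _ ⟨_, _, rfl⟩; positivity⟩ ⟨x, rfl, rfl⟩

variable [FiniteDimensional 𝕜 V] [FiniteDimensional 𝕜 W]

theorem shearCore_adjoint_inner_graph (φ : V →ₗ[𝕜] W)
    (hφ : ∀ x, φ (φ.adjoint (φ x)) = φ x) (x x' : V) :
    (shearCore φ.adjoint).inner (x, φ x) (x', φ x') = ⟪x, x'⟫_𝕜 := by
  rw [shearCore_inner, inner_sub_left, inner_sub_right, inner_sub_right]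
  simp only [LinearMap.adjoint_inner_left, LinearMap.adjoint_inner_right, hφ]
  ring

namespace LinearMap.HasQuotientNorm

variable {π : V →ₗ[𝕜] W}

theorem norm_adjoint_apply (hπ : π.HasQuotientNorm) (hsurj : Function.Surjective π) (y : W) :
    ‖π.adjoint y‖ = ‖y‖ := by
  have h₁ : ‖π.adjoint y‖ ^ 2 ≤ ‖π.adjoint y‖ * ‖y‖ :=
    calc ‖π.adjoint y‖ ^ 2 = re ⟪π (π.adjoint y), y⟫_𝕜 := by
          rw [← LinearMap.adjoint_inner_right, inner_self_eq_norm_sq]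
      _ ≤ ‖π (π.adjoint y)‖ * ‖y‖ := re_inner_le_norm _ _
      _ ≤ ‖π.adjoint y‖ * ‖y‖ := by gcongr; exact hπ.norm_apply_le _
  have h₂ : ‖y‖ ^ 2 ≤ ‖π.adjoint y‖ * ‖y‖ := by
    obtain ⟨x₀, hx₀⟩ := hsurj y
    have : Nonempty (π ⁻¹' {y}) := ⟨⟨x₀, hx₀⟩⟩
    calc ‖y‖ ^ 2 ≤ ⨅ x : π ⁻¹' {y}, ‖π.adjoint y‖ * ‖(x : V)‖ := le_ciInf fun ⟨x, hx⟩ ↦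
          calc ‖y‖ ^ 2 = re ⟪x, π.adjoint y⟫_𝕜 := by
                rw [LinearMap.adjoint_inner_right, show π x = y from hx, inner_self_eq_norm_sq]
            _ ≤ ‖x‖ * ‖π.adjoint y‖ := re_inner_le_norm _ _
            _ = ‖π.adjoint y‖ * ‖x‖ := mul_comm _ _
      _ = ‖π.adjoint y‖ * ‖y‖ := by
          rw [← Real.mul_iInf_of_nonneg (norm_nonneg _), ← sInf_image', ← hπ]
  nlinarith [sq_nonneg (‖π.adjoint y‖ - ‖y‖)]

theorem apply_adjoint_apply (hπ : π.HasQuotientNorm) (hsurj : Function.Surjective π) (y : W) :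
    π (π.adjoint y) = y := by
  let e : W →ₗᵢ[𝕜] V := { toLinearMap := π.adjoint, norm_map' := hπ.norm_adjoint_apply hsurj }
  simpa [e] using LinearMap.congr_fun e.adjoint_comp_self' y

end LinearMap.HasQuotientNorm

end

/-- **Statement 8.** Let `E`, `F₀`, `F` be finite dimensional complex inner product
spaces, `π : E → F₀` surjective with the norm of `F₀` the quotient norm induced by
`π`, and `i : F₀ → F` an isometric embedding. Set `φ = i ∘ π` with adjoint `φ†`.
Then the sesquilinear form
`⟨(x,y),(x',y')⟩₀ = ⟨x − φ†y, x' − φ†y'⟩_E + ⟨y,y'⟩_F` is a Hermitian inner product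
on `E × F` such that (a) `x ↦ (x, φ x)` is an isometric embedding of `E` and
(b) the quotient norm on `F` induced by the second projection equals `‖·‖_F`. -/
theorem stmt8 {E F₀ F : Type*}
    [NormedAddCommGroup E] [InnerProductSpace ℂ E] [FiniteDimensional ℂ E]
    [NormedAddCommGroup F₀] [InnerProductSpace ℂ F₀] [FiniteDimensional ℂ F₀]
    [NormedAddCommGroup F] [InnerProductSpace ℂ F] [FiniteDimensional ℂ F]
    (π : E →ₗ[ℂ] F₀) (hπsurj : Function.Surjective π)
    (hπquot : ∀ y : F₀, ‖y‖ = sInf ((fun x : E => ‖x‖) '' (π ⁻¹' {y})))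
    (i : F₀ →ₗ[ℂ] F) (hi : ∀ x : F₀, ‖i x‖ = ‖x‖) :
    ∃ core : InnerProductSpace.Core ℂ (E × F),
      (∀ p q : E × F,
        core.inner p q =
          (inner ℂ (p.1 - LinearMap.adjoint (i ∘ₗ π) p.2)
                 (q.1 - LinearMap.adjoint (i ∘ₗ π) q.2) : ℂ) +
            (inner ℂ p.2 q.2 : ℂ)) ∧
      (∀ x x' : E,
        core.inner (x, (i ∘ₗ π) x) (x', (i ∘ₗ π) x') = (inner ℂ x x' : ℂ)) ∧
      (∀ y : F,
        sInf ((fun p : E × F => Real.sqrt (core.inner p p).re) ''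
          {p : E × F | p.2 = y}) = ‖y‖) := by
  have hπ : ∀ y, π (LinearMap.adjoint π y) = y :=
    LinearMap.HasQuotientNorm.apply_adjoint_apply hπquot hπsurj
  have hi₀ : ∀ z, LinearMap.adjoint i (i z) = z :=
    LinearMap.congr_fun ({ toLinearMap := i, norm_map' := hi } : F₀ →ₗᵢ[ℂ] F).adjoint_comp_self'
  refine ⟨shearCore (LinearMap.adjoint (i ∘ₗ π)), fun _ _ ↦ rfl,
    shearCore_adjoint_inner_graph _ fun x ↦ ?_,
    sInf_sqrt_re_shearCore_inner_self (LinearMap.adjoint (i ∘ₗ π))⟩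
  simp only [LinearMap.adjoint_comp, LinearMap.comp_apply, hi₀, hπ]
end

section
/- Let E and F be finite dimensional complex inner product spaces and let φ: E → F be a ℂ-linear map with operator norm ‖φ‖ ≤ 1, with adjoint φ†: F → E. Let P: E → E be the unique positive self-adjoint square root of 1_E − φ†∘φ and Q: F → F the unique positive self-adjoint square root of 1_F − φ∘φ†. Then φ† ∘ Q = P ∘ φ† and Q ∘ φ = φ ∘ P. -/
/-!
From `P² = 1 - φ†φ` and `Q² = 1 - φφ†` one gets `φ† Q² = P² φ†` and `Q² φ = φ P²`, so it suffices
to show that an operator `S` with `S B² = A² S`, for positive `A` and `B`, also satisfies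
`S B = A S`. On the Hilbert sum `E ⊕ F` this says that the corner operator `(x, y) ↦ (S y, 0)`
commutes with the square of the positive operator `A ⊕ B`; it then commutes with its square root
`A ⊕ B`, as every element commuting with `a ≥ 0` commutes with `√a = cfc NNReal.sqrt a`.
-/

open scoped ComplexOrder

theorem Commute.of_mul_self_right_of_nonneg {A : Type*} [CStarAlgebra A] [PartialOrder A]
    [StarOrderedRing A] {a b : A} (ha : 0 ≤ a) (h : Commute b (a * a)) : Commute b a := by
  rw [← CFC.sqrt_mul_self a, CFC.sqrt_eq_cfc]
  exact (h.symm.cfc_nnreal _).symm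

namespace ContinuousLinearMap

variable {E F : Type*} [NormedAddCommGroup E] [InnerProductSpace ℂ E]
  [NormedAddCommGroup F] [InnerProductSpace ℂ F]

/-- `E × F` carries the sup norm; operators are moved to the Hilbert sum `WithLp 2 (E × F)`. -/
noncomputable def toL2ProdEnd :
    (E × F →L[ℂ] E × F) ≃A[ℂ] (WithLp 2 (E × F) →L[ℂ] WithLp 2 (E × F)) :=
  (WithLp.prodContinuousLinearEquiv 2 ℂ E F).symm.conjContinuousAlgEquiv

theorem IsPositive.toL2ProdEnd_prodMap {A : E →L[ℂ] E} {B : F →L[ℂ] F}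
    (hA : A.IsPositive) (hB : B.IsPositive) : (toL2ProdEnd (A.prodMap B)).IsPositive := by
  rw [isPositive_iff]
  refine ⟨fun x y => ?_, fun x => ?_⟩
  · simp [toL2ProdEnd, WithLp.prod_inner_apply, hA.inner_left_eq_inner_right,
      hB.inner_left_eq_inner_right]
  · simpa [toL2ProdEnd, WithLp.prod_inner_apply] using
      add_nonneg (hA.inner_nonneg_left x.fst) (hB.inner_nonneg_left x.snd)

theorem IsPositive.intertwine_of_intertwine_sq [CompleteSpace E] [CompleteSpace F]
    {A : E →L[ℂ] E} {B : F →L[ℂ] F} {S : F →L[ℂ] E} (hA : A.IsPositive) (hB : B.IsPositive)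
    (h : S ∘L (B ∘L B) = (A ∘L A) ∘L S) : S ∘L B = A ∘L S := by
  set D := toL2ProdEnd (A.prodMap B)
  set X := toL2ProdEnd (inl ℂ E F ∘L S ∘L snd ℂ E F)
  have hD : 0 ≤ D := (nonneg_iff_isPositive D).2 (hA.toL2ProdEnd_prodMap hB)
  have hXD2 : Commute X (D * D) := by
    rw [Commute, SemiconjBy, ← map_mul, ← map_mul, ← map_mul]
    congr 1
    ext x <;> simp
    exact DFunLike.congr_fun h x
  have hXD := (hXD2.of_mul_self_right_of_nonneg hD).eq
  rw [← map_mul, ← map_mul] at hXD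
  ext y
  simpa using congr_arg Prod.fst (DFunLike.congr_fun (toL2ProdEnd.injective hXD) (0, y))

end ContinuousLinearMap

open ContinuousLinearMap

theorem stmt10_general {E F : Type*}
    [NormedAddCommGroup E] [InnerProductSpace ℂ E] [FiniteDimensional ℂ E]
    [NormedAddCommGroup F] [InnerProductSpace ℂ F] [FiniteDimensional ℂ F]
    (φ : E →L[ℂ] F)
    (P : E →L[ℂ] E) (Q : F →L[ℂ] F)
    (hP : P.IsPositive) (hQ : Q.IsPositive)
    (hP2 : P ∘L P = 1 - ContinuousLinearMap.adjoint φ ∘L φ)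
    (hQ2 : Q ∘L Q = 1 - φ ∘L ContinuousLinearMap.adjoint φ) :
    ContinuousLinearMap.adjoint φ ∘L Q = P ∘L ContinuousLinearMap.adjoint φ ∧
      Q ∘L φ = φ ∘L P := by
  have hadj : adjoint φ ∘L (Q ∘L Q) = (P ∘L P) ∘L adjoint φ := by
    simp only [hP2, hQ2, comp_sub, sub_comp, comp_assoc, one_def, comp_id, id_comp]
  have hφ : φ ∘L (P ∘L P) = (Q ∘L Q) ∘L φ := by
    simp only [hP2, hQ2, comp_sub, sub_comp, comp_assoc, one_def, comp_id, id_comp]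
  exact ⟨hP.intertwine_of_intertwine_sq hQ hadj, (hQ.intertwine_of_intertwine_sq hP hφ).symm⟩

/-- **Statement 10.** Let `E`, `F` be finite dimensional complex inner product
spaces, `φ : E → F` linear with `‖φ‖ ≤ 1` and adjoint `φ†`. Let `P` be the (unique)
positive self-adjoint square root of `1 − φ†φ` and `Q` the (unique) positive
self-adjoint square root of `1 − φφ†`. Then `φ† ∘ Q = P ∘ φ†` and `Q ∘ φ = φ ∘ P`. -/
theorem stmt10 {E F : Type*}
    [NormedAddCommGroup E] [InnerProductSpace ℂ E] [FiniteDimensional ℂ E]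
    [NormedAddCommGroup F] [InnerProductSpace ℂ F] [FiniteDimensional ℂ F]
    (φ : E →L[ℂ] F) (hφ : ‖φ‖ ≤ 1)
    (P : E →L[ℂ] E) (Q : F →L[ℂ] F)
    (hP : P.IsPositive) (hQ : Q.IsPositive)
    (hP2 : P ∘L P = 1 - ContinuousLinearMap.adjoint φ ∘L φ)
    (hQ2 : Q ∘L Q = 1 - φ ∘L ContinuousLinearMap.adjoint φ) :
    ContinuousLinearMap.adjoint φ ∘L Q = P ∘L ContinuousLinearMap.adjoint φ ∧
      Q ∘L φ = φ ∘L P :=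
  stmt10_general φ P Q hP hQ hP2 hQ2
end

section
/- Let C be an abelian category equipped with additive degree and rank functions deg and rk as in the context. Let X be a nonzero object and α ∈ ℝ such that μ(Y) ≤ α for every nonzero subobject Y of X. If Z₁ and Z₂ are nonzero subobjects of X with μ(Z₁) = μ(Z₂) = α, then their join Z₁ ⊔ Z₂ in the subobject lattice of X satisfies μ(Z₁ ⊔ Z₂) = α. -/
open CategoryTheory CategoryTheory.Limits

universe v u

variable {C : Type u} [Category.{v} C] [Abelian C]

/-- The slope `μ(X) = deg X / rk X` associated to degree and rank functions. -/
noncomputable def hnSlope (deg : C → ℝ) (rk : C → ℤ) (X : C) : ℝ :=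
  deg X / (rk X : ℝ)

/-- `X` is semistable if it is nonzero and `μ(Y) ≤ μ(X)` for every nonzero
subobject `Y` of `X`. -/
def HNSemistable (deg : C → ℝ) (rk : C → ℤ) (X : C) : Prop :=
  ¬ IsZero X ∧
    ∀ (Y : C) (f : Y ⟶ X), Mono f → ¬ IsZero Y →
      hnSlope deg rk Y ≤ hnSlope deg rk X

/-!
By additivity along `0 → Z₁ ⊓ Z₂ → Z₁ ⊞ Z₂ → Z₁ ⊔ Z₂ → 0`, the function `φ = deg - α • rk` is
modular: `φ (Z₁ ⊓ Z₂) + φ (Z₁ ⊔ Z₂) = φ Z₁ + φ Z₂ = 0`. The slope bound says `φ ≤ 0` on all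
subobjects of `X` (zero ones included, where `φ` vanishes), so both summands on the left are `0`,
and `φ (Z₁ ⊔ Z₂) = 0` means `μ (Z₁ ⊔ Z₂) = α` because `Z₁ ⊔ Z₂ ≥ Z₁` is nonzero.
-/

namespace CategoryTheory.Subobject

variable {X : C} (Z₁ Z₂ : Subobject X)

noncomputable abbrev infBiprodSupComplex : ShortComplex C :=
  ShortComplex.mk
    (biprod.lift (ofLE (Z₁ ⊓ Z₂) Z₁ _root_.inf_le_left) (ofLE (Z₁ ⊓ Z₂) Z₂ _root_.inf_le_right))
    (biprod.desc (ofLE Z₁ (Z₁ ⊔ Z₂) le_sup_left) (-ofLE Z₂ (Z₁ ⊔ Z₂) le_sup_right))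
    (by simp [ofLE_comp_ofLE])

instance : Mono (infBiprodSupComplex Z₁ Z₂).f :=
  mono_of_mono_fac (show _ ≫ biprod.fst ≫ Z₁.arrow = (Z₁ ⊓ Z₂).arrow by simp)

lemma eq_zero_of_ofLE_sup_comp_eq_zero {P : C} (h : ((Z₁ ⊔ Z₂ : Subobject X) : C) ⟶ P)
    (h₁ : ofLE Z₁ _ le_sup_left ≫ h = 0) (h₂ : ofLE Z₂ _ le_sup_right ≫ h = 0) : h = 0 := by
  -- `Z₁ ⊔ Z₂` lies in the image of `kernel h` in `X`, so `kernel.ι h` is a split epimorphism.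
  have hK : Z₁ ⊔ Z₂ ≤ Subobject.mk (kernel.ι h ≫ (Z₁ ⊔ Z₂).arrow) := sup_le
    (le_mk_of_comm (kernel.lift h _ h₁) (by simp))
    (le_mk_of_comm (kernel.lift h _ h₂) (by simp))
  have hsplit : ofLEMk _ _ hK ≫ kernel.ι h = 𝟙 _ := by
    simp [← cancel_mono (Z₁ ⊔ Z₂).arrow]
  rw [← Category.id_comp h, ← hsplit, Category.assoc, kernel.condition, comp_zero]

instance : Epi (infBiprodSupComplex Z₁ Z₂).g :=
  Preadditive.epi_of_cancel_zero _ fun h hg ↦ eq_zero_of_ofLE_sup_comp_eq_zero Z₁ Z₂ h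
    (by simpa using biprod.inl ≫= hg) (by simpa using biprod.inr ≫= hg)

lemma infBiprodSupComplex_exact : (infBiprodSupComplex Z₁ Z₂).Exact := by
  refine ShortComplex.exact_of_f_is_kernel _ (KernelFork.IsLimit.ofι' _ _ fun k hk ↦ ?_)
  have hk' : (k ≫ biprod.fst) ≫ Z₁.arrow = (k ≫ biprod.snd) ≫ Z₂.arrow := by
    rw [← sub_eq_zero]
    simpa [biprod.desc_eq, sub_eq_add_neg] using hk =≫ (Z₁ ⊔ Z₂).arrow
  have hW : (Z₁ ⊓ Z₂).Factors ((k ≫ biprod.fst) ≫ Z₁.arrow) :=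
    (inf_factors _).2 ⟨(factors_iff _ _).2 ⟨_, rfl⟩, (factors_iff _ _).2 ⟨_, hk'.symm⟩⟩
  refine ⟨(Z₁ ⊓ Z₂).factorThru _ hW, biprod.hom_ext _ _ ?_ ?_⟩
  · simp [← cancel_mono Z₁.arrow]
  · simp [← cancel_mono Z₂.arrow, hk']

lemma infBiprodSupComplex_shortExact : (infBiprodSupComplex Z₁ Z₂).ShortExact :=
  ⟨infBiprodSupComplex_exact Z₁ Z₂⟩

end CategoryTheory.Subobject

def IsShortExactAdditive {M : Type*} [AddCommMonoid M] (f : C → M) : Prop :=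
  ∀ S : ShortComplex C, S.ShortExact → f S.X₂ = f S.X₁ + f S.X₃

namespace IsShortExactAdditive

variable {M : Type*}

lemma eq_zero_of_isZero [AddCancelCommMonoid M] {f : C → M} (hf : IsShortExactAdditive f)
    {Z : C} (hZ : IsZero Z) : f Z = 0 := by
  have hse : (ShortComplex.mk (𝟙 Z) (𝟙 Z) (hZ.eq_of_src _ _)).ShortExact :=
    { exact := ShortComplex.exact_of_isZero_X₂ _ hZ }
  simpa using hf _ hse

variable [AddCommMonoid M] {f : C → M}

lemma biprod (hf : IsShortExactAdditive f) (A B : C) : f (A ⊞ B) = f A + f B :=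
  hf _ (ShortComplex.Splitting.ofHasBinaryBiproduct A B).shortExact

lemma inf_add_sup (hf : IsShortExactAdditive f) {X : C} (Z₁ Z₂ : Subobject X) :
    f ((Z₁ ⊓ Z₂ : Subobject X) : C) + f ((Z₁ ⊔ Z₂ : Subobject X) : C) = f Z₁ + f Z₂ := by
  rw [← hf.biprod (Z₁ : C) Z₂]
  exact (hf _ (Subobject.infBiprodSupComplex_shortExact Z₁ Z₂)).symm

end IsShortExactAdditive

section Slope

variable {deg : C → ℝ} {rk : C → ℤ}

lemma deg_eq_hnSlope_mul_rk (hdeg : IsShortExactAdditive deg) (hrk : IsShortExactAdditive rk)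
    (hrk_pos : ∀ X : C, ¬ IsZero X → 1 ≤ rk X) (Y : C) : deg Y = hnSlope deg rk Y * rk Y := by
  by_cases hY : IsZero Y
  · simp [hdeg.eq_zero_of_isZero hY, hrk.eq_zero_of_isZero hY]
  · have hrk_ne : (rk Y : ℝ) ≠ 0 := by exact_mod_cast (hrk_pos Y hY).trans_lt' one_pos |>.ne'
    exact (div_mul_cancel₀ _ hrk_ne).symm

lemma deg_le_mul_rk (hdeg : IsShortExactAdditive deg) (hrk : IsShortExactAdditive rk)
    (hrk_pos : ∀ X : C, ¬ IsZero X → 1 ≤ rk X) {Y : C} {α : ℝ}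
    (h : ¬ IsZero Y → hnSlope deg rk Y ≤ α) : deg Y ≤ α * rk Y := by
  rw [deg_eq_hnSlope_mul_rk hdeg hrk hrk_pos]
  by_cases hY : IsZero Y
  · simp [hrk.eq_zero_of_isZero hY]
  · exact mul_le_mul_of_nonneg_right (h hY) (by exact_mod_cast (hrk_pos Y hY).trans' zero_le_one)

end Slope

theorem stmt18_general (deg : C → ℝ) (rk : C → ℤ)
    (hdeg : ∀ S : ShortComplex C, S.ShortExact → deg S.X₂ = deg S.X₁ + deg S.X₃)
    (hrk : ∀ S : ShortComplex C, S.ShortExact → rk S.X₂ = rk S.X₁ + rk S.X₃)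
    (hrk_pos : ∀ X : C, ¬ IsZero X → 1 ≤ rk X)
    {X : C} (α : ℝ)
    (hbound : ∀ Y : Subobject X, ¬ IsZero (Y : C) → hnSlope deg rk (Y : C) ≤ α)
    (Z₁ Z₂ : Subobject X)
    (hZ₁ : ¬ IsZero (Z₁ : C))
    (hμ₁ : hnSlope deg rk (Z₁ : C) = α) (hμ₂ : hnSlope deg rk (Z₂ : C) = α) :
    hnSlope deg rk ((Z₁ ⊔ Z₂ : Subobject X) : C) = α := by
  have hsup : ¬ IsZero ((Z₁ ⊔ Z₂ : Subobject X) : C) :=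
    fun h ↦ hZ₁ (h.of_mono (Subobject.ofLE Z₁ _ le_sup_left))
  have hdeg_modular := IsShortExactAdditive.inf_add_sup hdeg Z₁ Z₂
  have hrk_modular : (rk ((Z₁ ⊓ Z₂ : Subobject X) : C) : ℝ) + rk ((Z₁ ⊔ Z₂ : Subobject X) : C)
      = rk (Z₁ : C) + rk (Z₂ : C) := by
    exact_mod_cast IsShortExactAdditive.inf_add_sup hrk Z₁ Z₂
  have h₁ : deg (Z₁ : C) = α * rk (Z₁ : C) := hμ₁ ▸ deg_eq_hnSlope_mul_rk hdeg hrk hrk_pos _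
  have h₂ : deg (Z₂ : C) = α * rk (Z₂ : C) := hμ₂ ▸ deg_eq_hnSlope_mul_rk hdeg hrk hrk_pos _
  have hinf_le := deg_le_mul_rk hdeg hrk hrk_pos (hbound (Z₁ ⊓ Z₂))
  have hsup_le := deg_le_mul_rk hdeg hrk hrk_pos (hbound (Z₁ ⊔ Z₂))
  have hrk_sup : (rk ((Z₁ ⊔ Z₂ : Subobject X) : C) : ℝ) ≠ 0 := by
    exact_mod_cast (hrk_pos _ hsup).trans_lt' one_pos |>.ne'
  rw [hnSlope, div_eq_iff hrk_sup]
  linarith [congrArg (α * ·) hrk_modular]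

/-- **Statement 18.** In an abelian category with additive degree and rank functions,
let `X` be nonzero and `α ∈ ℝ` with `μ(Y) ≤ α` for every nonzero subobject `Y` of
`X`. If `Z₁`, `Z₂` are nonzero subobjects of `X` of slope `α`, then so is their
join `Z₁ ⊔ Z₂` in the subobject lattice of `X`. -/
theorem stmt18 (deg : C → ℝ) (rk : C → ℤ)
    (hdeg : ∀ S : ShortComplex C, S.ShortExact → deg S.X₂ = deg S.X₁ + deg S.X₃)
    (hrk : ∀ S : ShortComplex C, S.ShortExact → rk S.X₂ = rk S.X₁ + rk S.X₃)
    (hrk_pos : ∀ X : C, ¬ IsZero X → 1 ≤ rk X)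
    (hrk_zero : ∀ X : C, IsZero X → rk X = 0)
    {X : C} (hX : ¬ IsZero X) (α : ℝ)
    (hbound : ∀ Y : Subobject X, ¬ IsZero (Y : C) → hnSlope deg rk (Y : C) ≤ α)
    (Z₁ Z₂ : Subobject X)
    (hZ₁ : ¬ IsZero (Z₁ : C)) (hZ₂ : ¬ IsZero (Z₂ : C))
    (hμ₁ : hnSlope deg rk (Z₁ : C) = α) (hμ₂ : hnSlope deg rk (Z₂ : C) = α) :
    hnSlope deg rk ((Z₁ ⊔ Z₂ : Subobject X) : C) = α :=
  stmt18_general deg rk hdeg hrk hrk_pos α hbound Z₁ Z₂ hZ₁ hμ₁ hμ₂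
end
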